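/- arXiv:1709.01106 — 7 statements merged into one kernel-verified Lean document; each statement's English description precedes it below -/
import Mathlib

section
/- There is no real number B with -1 < B < 0 satisfying B·exp(√(1-B²)) + √(1-B²) + 1 = 0. -/
/-!
Put `s = √(1 - B²) ∈ (0, 1)`. The equation says `B eˢ = -(1 + s)`; squaring and using
`B² = (1 - s)(1 + s)` gives `(1 - s) e²ˢ = 1 + s`. But `e²ˢ < (1 + s)/(1 - s)` on `(0, 1)`, since
`log ((1 + s)/(1 - s)) = 2 artanh s > 2s`.
-/

open Real

lemma one_sub_mul_exp_two_mul_lt {s : ℝ} (hs : 0 < s) (hs1 : s < 1) :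
    (1 - s) * exp (2 * s) < 1 + s := by
  have h1s : 0 < 1 - s := by linarith
  have hlog := lt_log_one_add_of_pos (show 0 < 2 * s / (1 - s) by positivity)
  have hlhs : 2 * (2 * s / (1 - s)) / (2 * s / (1 - s) + 2) = 2 * s := by
    field_simp
    ring
  have hrhs : 1 + 2 * s / (1 - s) = (1 + s) / (1 - s) := by
    field_simp
    ring
  rw [hlhs, hrhs, lt_log_iff_exp_lt (by positivity), lt_div_iff₀ h1s] at hlog
  linarith

theorem no_root_B :
    ¬ ∃ B : ℝ, -1 < B ∧ B < 0 ∧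
      B * Real.exp (Real.sqrt (1 - B ^ 2)) + Real.sqrt (1 - B ^ 2) + 1 = 0 := by
  rintro ⟨B, hB1, hB0, hroot⟩
  set s := √(1 - B ^ 2)
  have hB2 : 0 < 1 - B ^ 2 := by nlinarith
  have hs_sq : s ^ 2 = 1 - B ^ 2 := sq_sqrt hB2.le
  have hs0 : 0 < s := sqrt_pos.2 hB2
  have hs1 : s < 1 := by nlinarith
  have hsquared : (1 + s) * ((1 - s) * exp (2 * s)) = (1 + s) * (1 + s) := by
    have hBexp : B * exp s = -(1 + s) := by linarith
    calc (1 + s) * ((1 - s) * exp (2 * s)) = (B * exp s) ^ 2 := by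
          rw [two_mul, exp_add]
          linear_combination -(exp s * exp s) * hs_sq
      _ = (1 + s) * (1 + s) := by rw [hBexp]; ring
  exact (one_sub_mul_exp_two_mul_lt hs0 hs1).ne
    (mul_left_cancel₀ (by positivity) hsquared)
end

section
/- Let A ∈ ℝ and B ≥ 0. Then the system of equations (A+1)m₁ + 2m₁ log m₁ = B·m₂ and (A+1)m₂ + 2m₂ log m₂ = B·m₁ has exactly one solution with m₁, m₂ > 0, and this solution satisfies m₁ = m₂. -/
/-!
Dividing the equation for `m₁` by `m₁` turns it into `A + 1 + 2 log m₁ = B m₂ / m₁`, and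
similarly for `m₂`. If `m₁ < m₂`, the left-hand side increases from the first equation to the
second while, as `B ≥ 0`, the right-hand side decreases from `B m₂ / m₁ ≥ B` to `B m₁ / m₂ ≤ B`;
so every positive solution is symmetric. On the diagonal the system reduces to
`A + 1 + 2 log m = B`, whose only solution is `m = exp ((B - A - 1) / 2)`.
-/

open Real

lemma mul_log_eq_mul_iff {A B m m' : ℝ} (hm : 0 < m) :
    (A + 1) * m + 2 * m * log m = B * m' ↔ A + 1 + 2 * log m = B * m' / m := by
  rw [eq_div_iff hm.ne']
  constructor <;> intro h <;> linarith

lemma le_of_mul_log_eq_of_mul_log_eq {A B m₁ m₂ : ℝ} (hB : 0 ≤ B) (h₁ : 0 < m₁) (h₂ : 0 < m₂)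
    (e₁ : (A + 1) * m₁ + 2 * m₁ * log m₁ = B * m₂)
    (e₂ : (A + 1) * m₂ + 2 * m₂ * log m₂ = B * m₁) : m₁ ≤ m₂ := by
  by_contra! hlt
  rw [mul_log_eq_mul_iff h₁] at e₁
  rw [mul_log_eq_mul_iff h₂] at e₂
  have hlog : log m₂ < log m₁ := log_lt_log h₂ hlt
  have hdiv : B * m₂ / m₁ ≤ B * m₁ / m₂ := by
    rw [mul_div_assoc, mul_div_assoc]
    gcongr
  linarith

lemma mul_log_eq_mul_self_iff {A B m : ℝ} (hm : 0 < m) :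
    (A + 1) * m + 2 * m * log m = B * m ↔ m = exp ((B - A - 1) / 2) := by
  rw [mul_log_eq_mul_iff hm, mul_div_cancel_right₀ B hm.ne']
  constructor
  · intro h
    rw [← exp_log hm]
    congr 1
    linarith
  · rintro rfl
    rw [log_exp]
    ring

theorem unique_symmetric_solution (A B : ℝ) (hB : 0 ≤ B) :
    (∃! p : ℝ × ℝ, 0 < p.1 ∧ 0 < p.2 ∧
        (A + 1) * p.1 + 2 * p.1 * Real.log p.1 = B * p.2 ∧
        (A + 1) * p.2 + 2 * p.2 * Real.log p.2 = B * p.1) ∧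
    (∀ m₁ m₂ : ℝ, 0 < m₁ → 0 < m₂ →
        (A + 1) * m₁ + 2 * m₁ * Real.log m₁ = B * m₂ →
        (A + 1) * m₂ + 2 * m₂ * Real.log m₂ = B * m₁ → m₁ = m₂) := by
  have symmetric : ∀ m₁ m₂ : ℝ, 0 < m₁ → 0 < m₂ →
      (A + 1) * m₁ + 2 * m₁ * log m₁ = B * m₂ →
      (A + 1) * m₂ + 2 * m₂ * log m₂ = B * m₁ → m₁ = m₂ := fun m₁ m₂ h₁ h₂ e₁ e₂ =>
    le_antisymm (le_of_mul_log_eq_of_mul_log_eq hB h₁ h₂ e₁ e₂)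
      (le_of_mul_log_eq_of_mul_log_eq hB h₂ h₁ e₂ e₁)
  set m₀ := exp ((B - A - 1) / 2)
  have hm₀ : 0 < m₀ := exp_pos _
  have e₀ : (A + 1) * m₀ + 2 * m₀ * log m₀ = B * m₀ := (mul_log_eq_mul_self_iff hm₀).2 rfl
  refine ⟨⟨(m₀, m₀), ⟨hm₀, hm₀, e₀, e₀⟩, ?_⟩, symmetric⟩
  rintro ⟨x, y⟩ ⟨hx, hy, ex, ey⟩
  obtain rfl := symmetric x y hx hy ex ey
  obtain rfl := (mul_log_eq_mul_self_iff hx).1 ex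
  rfl
end

section
/- Let A, B ∈ ℝ with -1 < B < 0. Then the system (A+1)t + 2t log t = Bs, (A+1)s + 2s log s = Bt, and Bt² + 2ts + Bs² = 0 has no solution with t, s > 0. -/
/-!
Subtracting `s` times the first equation from `t` times the second and using the third gives
`(s² + t²) log (s / t) = s² - t²`, that is `x cosh x = sinh x` for `x = log (s / t)`.
Since `sinh x < x cosh x` for `x > 0` (and both sides are odd), `s = t`, and then the third
equation forces `B = -1`.
-/

open Real Set

theorem Real.sinh_lt_mul_cosh {x : ℝ} (hx : 0 < x) : sinh x < x * cosh x := by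
  have hmono : StrictMonoOn (fun y => y * cosh y - sinh y) (Ici 0) := by
    refine strictMonoOn_of_hasDerivWithinAt_pos (f' := fun y => y * sinh y) (convex_Ici 0)
      (by fun_prop) (fun y _ => ?_) (fun y hy => ?_)
    · exact ((((hasDerivAt_id y).mul (hasDerivAt_cosh y)).sub (hasDerivAt_sinh y)).congr_deriv
        (by simp only [id, one_mul]; ring)).hasDerivWithinAt
    · rw [interior_Ici] at hy
      exact mul_pos hy (sinh_pos_iff.mpr hy)
  simpa using hmono self_mem_Ici hx.le hx

theorem Real.eq_zero_of_sinh_eq_mul_cosh {x : ℝ} (h : sinh x = x * cosh x) : x = 0 := by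
  rcases lt_trichotomy x 0 with hneg | hzero | hpos
  · have := sinh_lt_mul_cosh (neg_pos.mpr hneg)
    rw [sinh_neg, cosh_neg, h] at this
    linarith
  · exact hzero
  · exact absurd h (sinh_lt_mul_cosh hpos).ne

theorem eq_of_sq_add_sq_mul_log_sub_log {s t : ℝ} (hs : 0 < s) (ht : 0 < t)
    (h : (s ^ 2 + t ^ 2) * (log s - log t) = s ^ 2 - t ^ 2) : s = t := by
  have hst : 0 < s / t := div_pos hs ht
  have hsinh : sinh (log (s / t)) = log (s / t) * cosh (log (s / t)) := by
    rw [sinh_log hst, cosh_log hst, log_div hs.ne' ht.ne']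
    field_simp
    linear_combination -h
  have := eq_zero_of_sinh_eq_mul_cosh hsinh
  rwa [log_eq_zero, div_eq_one_iff_eq ht.ne', or_iff_right (by positivity),
    or_iff_left (by linarith)] at this

theorem no_degenerate_solution_general (A B : ℝ) (hB1 : -1 < B) :
    ¬ ∃ t s : ℝ, 0 < t ∧ 0 < s ∧
      (A + 1) * t + 2 * t * Real.log t = B * s ∧
      (A + 1) * s + 2 * s * Real.log s = B * t ∧
      B * t ^ 2 + 2 * t * s + B * s ^ 2 = 0 := by
  rintro ⟨t, s, ht, hs, h1, h2, h3⟩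
  have hlog : (s ^ 2 + t ^ 2) * (log s - log t) = s ^ 2 - t ^ 2 := by
    have : 2 * t * s * ((s ^ 2 + t ^ 2) * (log s - log t) - (s ^ 2 - t ^ 2)) = 0 := by
      linear_combination (t ^ 2 + s ^ 2) * (t * h2 - s * h1) + (t ^ 2 - s ^ 2) * h3
    exact sub_eq_zero.mp ((mul_eq_zero.mp this).resolve_left (by positivity))
  obtain rfl := eq_of_sq_add_sq_mul_log_sub_log hs ht hlog
  have : 0 < 2 * (B + 1) * s ^ 2 := by nlinarith [sq_pos_of_pos hs]
  linarith

theorem no_degenerate_solution (A B : ℝ) (hB1 : -1 < B) (hB2 : B < 0) :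
    ¬ ∃ t s : ℝ, 0 < t ∧ 0 < s ∧
      (A + 1) * t + 2 * t * Real.log t = B * s ∧
      (A + 1) * s + 2 * s * Real.log s = B * t ∧
      B * t ^ 2 + 2 * t * s + B * s ^ 2 = 0 :=
  no_degenerate_solution_general A B hB1
end

section
/- Let A ∈ ℝ, C ∈ ℝ, and suppose (m₁, m₂) ∈ (0,∞)² satisfies (A+1)m₁ + 2m₁ log m₁ = 4π C m₂ and (A+1)m₂ + 2m₂ log m₂ = 4π C m₁. Define ψ(m₁,m₂) = A(m₁²+m₂²) + 2(m₁² log m₁ + m₂² log m₂) - 8π C m₁ m₂. Then the determinant of the Hessian of ψ at (m₁, m₂) equals 32π(m₂/m₁ + m₁/m₂)·C + 16. -/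
/-- The reduced functional ψ(m₁,m₂) = A(m₁²+m₂²) + 2(m₁² log m₁ + m₂² log m₂) - 8πC m₁m₂. -/
noncomputable def psiRed (A C : ℝ) (m₁ m₂ : ℝ) : ℝ :=
  A * (m₁ ^ 2 + m₂ ^ 2) + 2 * (m₁ ^ 2 * Real.log m₁ + m₂ ^ 2 * Real.log m₂)
    - 8 * Real.pi * C * m₁ * m₂

/-!
The partial derivatives of ψ are explicit: `∂ₓψ = 2Ax + 4x log x + 2x - 8πC y`, so
`∂ₓ²ψ = 2A + 4 log x + 6`, symmetrically in `y`, and `∂ₓ∂ᵧψ = -8πC`. At a critical point the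
critical-point equations turn the diagonal entries into `8πC m₂/m₁ + 4` and `8πC m₁/m₂ + 4`, and
the determinant `(a m₂/m₁ + 4)(a m₁/m₂ + 4) - a²` with `a = 8πC` is `4a(m₂/m₁ + m₁/m₂) + 16`.
-/

open Real

lemma hasDerivAt_sq_mul_log {x : ℝ} (hx : x ≠ 0) :
    HasDerivAt (fun t => t ^ 2 * log t) (2 * x * log x + x) x :=
  ((hasDerivAt_pow 2 x).mul (hasDerivAt_log hx)).congr_deriv (by field_simp; ring)

lemma psiRed_comm (A C a b : ℝ) : psiRed A C a b = psiRed A C b a := by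
  unfold psiRed
  ring

lemma hasDerivAt_psiRed_fst (A C y : ℝ) {x : ℝ} (hx : x ≠ 0) :
    HasDerivAt (fun t => psiRed A C t y) (2 * A * x + 4 * x * log x + 2 * x - 8 * π * C * y) x := by
  have hsq : HasDerivAt (fun t : ℝ => t ^ 2) (2 * x) x := by simpa using hasDerivAt_pow 2 x
  have hlin : HasDerivAt (fun t : ℝ => 8 * π * C * t * y) (8 * π * C * y) x := by
    simpa using ((hasDerivAt_id x).const_mul (8 * π * C)).mul_const y
  exact ((((hsq.add_const (y ^ 2)).const_mul A).add
    (((hasDerivAt_sq_mul_log hx).add_const (y ^ 2 * log y)).const_mul 2)).sub hlin).congr_deriv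
    (by ring)

lemma deriv_psiRed_fst (A C y : ℝ) {x : ℝ} (hx : x ≠ 0) :
    deriv (fun t => psiRed A C t y) x = 2 * A * x + 4 * x * log x + 2 * x - 8 * π * C * y :=
  (hasDerivAt_psiRed_fst A C y hx).deriv

lemma deriv_deriv_psiRed_fst (A C y : ℝ) {x : ℝ} (hx : x ≠ 0) :
    deriv (fun s => deriv (fun t => psiRed A C t y) s) x = 2 * A + 4 * log x + 6 := by
  have hfirst : (fun s => deriv (fun t => psiRed A C t y) s) =ᶠ[nhds x]
      fun s => 2 * A * s + 4 * (s * log s) + 2 * s - 8 * π * C * y := by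
    filter_upwards [eventually_ne_nhds hx] with s hs
    rw [deriv_psiRed_fst A C y hs]
    ring
  have hsecond : HasDerivAt (fun s => 2 * A * s + 4 * (s * log s) + 2 * s - 8 * π * C * y)
      (2 * A + 4 * log x + 6) x :=
    ((((hasDerivAt_id x).const_mul (2 * A)).add
      ((hasDerivAt_mul_log hx).const_mul 4)).add ((hasDerivAt_id x).const_mul 2)).sub_const
      (8 * π * C * y) |>.congr_deriv (by ring)
  rw [hfirst.deriv_eq, hsecond.deriv]

lemma deriv_deriv_psiRed_snd (A C x : ℝ) {y : ℝ} (hy : y ≠ 0) :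
    deriv (fun s => deriv (fun t => psiRed A C x t) s) y = 2 * A + 4 * log y + 6 := by
  simp_rw [psiRed_comm A C x]
  exact deriv_deriv_psiRed_fst A C x hy

lemma deriv_deriv_psiRed_mixed (A C : ℝ) {x : ℝ} (hx : x ≠ 0) (y : ℝ) :
    deriv (fun s => deriv (fun t => psiRed A C t s) x) y = -(8 * π * C) := by
  simp_rw [deriv_psiRed_fst A C _ hx]
  simp

lemma second_deriv_eq_of_critical {A C m n : ℝ} (hm : m ≠ 0)
    (h : (A + 1) * m + 2 * m * log m = 4 * π * C * n) :
    2 * A + 4 * log m + 6 = 8 * π * C * n / m + 4 := by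
  field_simp
  linear_combination 2 * h

theorem hessian_det_formula (A C : ℝ) (m₁ m₂ : ℝ) (h₁ : 0 < m₁) (h₂ : 0 < m₂)
    (e₁ : (A + 1) * m₁ + 2 * m₁ * Real.log m₁ = 4 * Real.pi * C * m₂)
    (e₂ : (A + 1) * m₂ + 2 * m₂ * Real.log m₂ = 4 * Real.pi * C * m₁) :
    deriv (fun x => deriv (fun x' => psiRed A C x' m₂) x) m₁ *
      deriv (fun y => deriv (fun y' => psiRed A C m₁ y') y) m₂ -
      deriv (fun y => deriv (fun x => psiRed A C x y) m₁) m₂ ^ 2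
    = 32 * Real.pi * (m₂ / m₁ + m₁ / m₂) * C + 16 := by
  rw [deriv_deriv_psiRed_fst A C m₂ h₁.ne', deriv_deriv_psiRed_snd A C m₁ h₂.ne',
    deriv_deriv_psiRed_mixed A C h₁.ne', second_deriv_eq_of_critical h₁.ne' e₁,
    second_deriv_eq_of_critical h₂.ne' e₂]
  field_simp
  ring
end

section
/- Let A ∈ ℝ and C ≥ 0, and suppose (m₁, m₂) ∈ (0,∞)² satisfies the system (A+1)mᵢ + 2mᵢ log mᵢ = 4π C mⱼ for {i,j} = {1,2}. Then the determinant of the Hessian of ψ(m₁,m₂) = A(m₁²+m₂²) + 2(m₁² log m₁ + m₂² log m₂) - 8π C m₁m₂ at (m₁,m₂) is at least 16; in particular (m₁,m₂) is a nondegenerate critical point of ψ. -/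
open Real Filter Topology

lemma sq_le_mul_sub_sq {a b p q u v : ℝ} (ha : 0 ≤ a) (hb : 0 ≤ b) (hp : 0 < p) (hq : 0 < q)
    (hu : u * p = a * q + b * p) (hv : v * q = a * p + b * q) :
    b ^ 2 ≤ u * v - a ^ 2 := by
  have key : (u * v - a ^ 2 - b ^ 2) * (p * q) = a * b * (p ^ 2 + q ^ 2) := by
    linear_combination (v * q) * hu + (a * q + b * p) * hv
  have : 0 ≤ u * v - a ^ 2 - b ^ 2 :=
    nonneg_of_mul_nonneg_left (key ▸ by positivity) (mul_pos hp hq)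
  linarith

namespace psiRed

lemma comm (A C x y : ℝ) : psiRed A C x y = psiRed A C y x := by
  unfold psiRed; ring

lemma hasDerivAt_fst (A C y : ℝ) {x : ℝ} (hx : 0 < x) :
    HasDerivAt (psiRed A C · y) (2 * A * x + 4 * (x * log x) + 2 * x - 8 * π * C * y) x := by
  have h := (((hasDerivAt_pow 2 x).add_const (y ^ 2)).const_mul A).add
    ((((hasDerivAt_pow 2 x).mul (hasDerivAt_log hx.ne')).add_const (y ^ 2 * log y)).const_mul 2)
    |>.sub (((hasDerivAt_id x).const_mul (8 * π * C)).mul_const y)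
  refine h.congr_deriv ?_
  field_simp
  ring

lemma hasDerivAt_deriv_fst (A C y : ℝ) {x : ℝ} (hx : 0 < x) :
    HasDerivAt (fun x => deriv (psiRed A C · y) x) (2 * A + 4 * log x + 6) x := by
  have hderiv : (fun x => deriv (psiRed A C · y) x) =ᶠ[𝓝 x]
      fun x => 2 * A * x + 4 * (x * log x) + 2 * x - 8 * π * C * y := by
    filter_upwards [Ioi_mem_nhds hx] with t ht
    exact (hasDerivAt_fst A C y ht).deriv
  have h := ((((hasDerivAt_id x).const_mul (2 * A)).add
    ((Real.hasDerivAt_mul_log hx.ne').const_mul 4)).add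
    ((hasDerivAt_id x).const_mul 2)).sub_const (8 * π * C * y)
  refine (h.congr_of_eventuallyEq hderiv).congr_deriv ?_
  simp only [mul_one]
  ring

lemma hasDerivAt_deriv_snd (A C x : ℝ) {y : ℝ} (hy : 0 < y) :
    HasDerivAt (fun y => deriv (psiRed A C x ·) y) (2 * A + 4 * log y + 6) y := by
  simpa only [comm A C x] using hasDerivAt_deriv_fst A C x hy

lemma hasDerivAt_deriv_fst_snd (A C y : ℝ) {x : ℝ} (hx : 0 < x) :
    HasDerivAt (fun y => deriv (psiRed A C · y) x) (-(8 * π * C)) y := by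
  simp only [fun y => (hasDerivAt_fst A C y hx).deriv]
  simpa using ((hasDerivAt_id y).const_mul (8 * π * C)).const_sub
    (2 * A * x + 4 * (x * log x) + 2 * x)

end psiRed

theorem hessian_det_ge (A C : ℝ) (hC : 0 ≤ C) (m₁ m₂ : ℝ) (h₁ : 0 < m₁) (h₂ : 0 < m₂)
    (e₁ : (A + 1) * m₁ + 2 * m₁ * Real.log m₁ = 4 * Real.pi * C * m₂)
    (e₂ : (A + 1) * m₂ + 2 * m₂ * Real.log m₂ = 4 * Real.pi * C * m₁) :
    16 ≤ deriv (fun x => deriv (fun x' => psiRed A C x' m₂) x) m₁ *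
        deriv (fun y => deriv (fun y' => psiRed A C m₁ y') y) m₂ -
        deriv (fun y => deriv (fun x => psiRed A C x y) m₁) m₂ ^ 2 := by
  rw [(psiRed.hasDerivAt_deriv_fst A C m₂ h₁).deriv, (psiRed.hasDerivAt_deriv_snd A C m₁ h₂).deriv,
    (psiRed.hasDerivAt_deriv_fst_snd A C m₂ h₁).deriv, neg_sq]
  calc (16 : ℝ) = 4 ^ 2 := by norm_num
    _ ≤ _ := sq_le_mul_sub_sq (by positivity) (by norm_num) h₁ h₂
      (by linear_combination 2 * e₁) (by linear_combination 2 * e₂)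
end

section
/- Let δ > 0 and m > 0 be constants. For sufficiently small ε > 0, the integral ∫_{δ√ε}^{δ/|log ε|} s·e^{16λm² (log s)²} ds is O(λ) as ε → 0, where λ > 0 is related to ε by log(1/ε⁴) = 1/(2λm²) - 2 log(2m²). -/
/-!
On `[a, b] ⊆ (0, 1]` we have `log s ∈ [log a, 0]`, hence `(log s)² ≤ log a · log s`, so the
integrand `s · exp (c (log s)²)` is at most the power `s ^ (1 + c log a)` and the integral is at
most `b ^ p / p` with `p = 2 + c log a`. Write `X = |log ε|`, so that `a = δ √ε = δ e^(-X/2)`,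
`b = δ / X` and, by the relation between `ε` and `λ`, `c = 16 λ m² = 8 / (4X + 2 log (2m²))`.
Then `p = 1 + (2 log (2m²) + 8 log δ) / (4X + 2 log (2m²))`, so `p ≥ 1/2` and
`b ^ (p - 1) = exp ((p - 1) log b)` stays bounded because `|log b| = O(X)`. Hence the integral is
`O(b) = O(1/X) = O(λ)`.
-/

open Real

lemma mul_exp_mul_log_sq_le_rpow {a c x : ℝ} (ha : 0 < a) (hax : a ≤ x) (hx : x ≤ 1)
    (hc : 0 ≤ c) : x * exp (c * log x ^ 2) ≤ x ^ (1 + c * log a) := by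
  have hx0 : 0 < x := ha.trans_le hax
  have hlog_nonpos : log x ≤ 0 := log_nonpos hx0.le hx
  have hlog_ge : log a ≤ log x := log_le_log ha hax
  rw [rpow_add hx0, rpow_one, rpow_def_of_pos hx0]
  refine mul_le_mul_of_nonneg_left (exp_le_exp.2 ?_) hx0.le
  nlinarith [mul_nonneg hc (mul_nonneg (neg_nonneg.2 hlog_nonpos) (sub_nonneg.2 hlog_ge))]

lemma integral_mul_exp_mul_log_sq_le {a b c : ℝ} (ha : 0 < a) (hab : a ≤ b) (hb : b ≤ 1)
    (hc : 0 ≤ c) (hp : 0 < 2 + c * log a) :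
    ∫ s in a..b, s * exp (c * log s ^ 2) ≤ b ^ (2 + c * log a) / (2 + c * log a) := by
  have hr : -1 < 1 + c * log a := by linarith
  have hr_succ : 1 + c * log a + 1 = 2 + c * log a := by ring
  have hf : IntervalIntegrable (fun s => s * exp (c * log s ^ 2)) MeasureTheory.volume a b := by
    refine ContinuousOn.intervalIntegrable_of_Icc hab ?_
    have hne : ∀ s ∈ Set.Icc a b, s ≠ 0 := fun s hs => (ha.trans_le hs.1).ne'
    fun_prop (disch := assumption)
  calc ∫ s in a..b, s * exp (c * log s ^ 2)
      ≤ ∫ s in a..b, s ^ (1 + c * log a) :=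
        intervalIntegral.integral_mono_on hab hf (intervalIntegral.intervalIntegrable_rpow' hr)
          fun x hx => mul_exp_mul_log_sq_le_rpow ha hx.1 (hx.2.trans hb) hc
    _ = (b ^ (2 + c * log a) - a ^ (2 + c * log a)) / (2 + c * log a) := by
        rw [integral_rpow (Or.inl hr), hr_succ]
    _ ≤ b ^ (2 + c * log a) / (2 + c * log a) := by
        gcongr
        exact sub_le_self _ (rpow_nonneg ha.le _)

lemma rpow_le_mul_exp_abs_mul_abs_log {b : ℝ} (hb : 0 < b) (p : ℝ) :
    b ^ p ≤ b * exp (|p - 1| * |log b|) := by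
  calc b ^ p = b * b ^ (p - 1) := by
        conv_lhs => rw [show p = 1 + (p - 1) by ring, rpow_add hb, rpow_one]
    _ ≤ b * exp (|p - 1| * |log b|) := by
        rw [rpow_def_of_pos hb, ← abs_mul, mul_comm (p - 1)]
        gcongr
        exact le_abs_self _

lemma self_le_exp_half {x : ℝ} (hx : 0 ≤ x) : x ≤ exp (x / 2) := by
  nlinarith [quadratic_le_exp_of_nonneg (x := x / 2) (by positivity)]

lemma abs_log_div_le {x y : ℝ} (hx : x ≠ 0) (hy : 1 ≤ y) : |log (x / y)| ≤ |log x| + y := by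
  rw [log_div hx (by positivity)]
  calc |log x - log y| ≤ |log x| + |log y| := abs_sub _ _
    _ ≤ |log x| + y := by
      rw [abs_of_nonneg (log_nonneg hy)]
      gcongr
      exact log_le_self (by positivity)

lemma abs_one_add_mul_sub_half_le {c P X q : ℝ} (hX : 0 < X) (hX_le : X ≤ 4 * X + 2 * P)
    (hc : c * (4 * X + 2 * P) = 8) : |1 + c * (q - X / 2)| ≤ |2 * P + 8 * q| / X := by
  have hmul : (1 + c * (q - X / 2)) * (4 * X + 2 * P) = 2 * P + 8 * q := by
    linear_combination (q - X / 2) * hc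
  rw [le_div_iff₀ hX, ← hmul, abs_mul, abs_of_pos (by linarith : 0 < 4 * X + 2 * P)]
  exact mul_le_mul_of_nonneg_left hX_le (abs_nonneg _)

lemma integral_mul_exp_mul_log_sq_le_div {δ P X c : ℝ} (hδ : 0 < δ)
    (hX : 1 + δ + 2 * |P| + 2 * |2 * P + 8 * log δ| ≤ X) (hc : c * (4 * X + 2 * P) = 8) :
    ∫ s in δ * exp (-(X / 2))..δ / X, s * exp (c * log s ^ 2) ≤
      2 * exp (|2 * P + 8 * log δ| * (|log δ| + 1)) * (δ / X) := by
  set K := 2 * P + 8 * log δ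
  have hP := abs_nonneg P
  have hK := abs_nonneg K
  have hX0 : 0 < X := by linarith
  have hX_le : X ≤ 4 * X + 2 * P := by linarith [neg_abs_le P]
  have hc0 : 0 ≤ c := by
    rw [eq_div_of_mul_eq (by linarith) hc]
    exact div_nonneg (by norm_num) (by linarith)
  have hloga : log (δ * exp (-(X / 2))) = log δ - X / 2 := by
    rw [log_mul hδ.ne' (exp_pos _).ne', log_exp]
    ring
  have hab : δ * exp (-(X / 2)) ≤ δ / X := by
    rw [exp_neg, ← div_eq_mul_inv]
    gcongr
    exact self_le_exp_half hX0.le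
  have hb : δ / X ≤ 1 := (div_le_one hX0).2 (by linarith)
  set p := 2 + c * log (δ * exp (-(X / 2)))
  have hp1 : |p - 1| ≤ |K| / X := by
    rw [show p - 1 = 1 + c * (log δ - X / 2) by simp only [p, hloga]; ring]
    exact abs_one_add_mul_sub_half_le hX0 hX_le hc
  have hp : 1 / 2 ≤ p := by
    have : |K| / X ≤ 1 / 2 := by rw [div_le_iff₀ hX0]; linarith
    linarith [neg_abs_le (p - 1)]
  calc ∫ s in δ * exp (-(X / 2))..δ / X, s * exp (c * log s ^ 2)
      ≤ (δ / X) ^ p / p := integral_mul_exp_mul_log_sq_le (by positivity) hab hb hc0 (by linarith)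
    _ ≤ (δ / X) * exp (|p - 1| * |log (δ / X)|) / (1 / 2) := by
        gcongr
        exact rpow_le_mul_exp_abs_mul_abs_log (by positivity) p
    _ = 2 * exp (|p - 1| * |log (δ / X)|) * (δ / X) := by ring
    _ ≤ 2 * exp (|K| * (|log δ| + 1)) * (δ / X) := by
        have : |p - 1| * |log (δ / X)| ≤ |K| * (|log δ| + 1) := by
          calc |p - 1| * |log (δ / X)| ≤ |K| / X * (|log δ| + X) :=
                mul_le_mul hp1 (abs_log_div_le hδ.ne' (by linarith)) (abs_nonneg _) (by positivity)
            _ ≤ |K| * (|log δ| + 1) := by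
              rw [div_mul_eq_mul_div, div_le_iff₀ hX0]
              nlinarith [mul_nonneg (abs_nonneg K) (abs_nonneg (log δ))]
        gcongr

theorem integral_big_O_lambda (δ m : ℝ) (hδ : 0 < δ) (hm : 0 < m) :
    ∃ C > (0 : ℝ), ∃ ε₀ > (0 : ℝ), ∀ ε lam : ℝ, 0 < ε → ε < ε₀ → 0 < lam →
      Real.log (1 / ε ^ 4) = 1 / (2 * lam * m ^ 2) - 2 * Real.log (2 * m ^ 2) →
      (∫ s in (δ * Real.sqrt ε)..(δ / |Real.log ε|),
          s * Real.exp (16 * lam * m ^ 2 * Real.log s ^ 2)) ≤ C * lam := by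
  set P := log (2 * m ^ 2)
  set K := 2 * P + 8 * log δ
  set M := 1 + δ + 2 * |P| + 2 * |K|
  refine ⟨20 * m ^ 2 * exp (|K| * (|log δ| + 1)) * δ, by positivity, exp (-M), exp_pos _, ?_⟩
  intro ε lam hε hεM hlam hrel
  set X := -log ε
  have hMX : M ≤ X := by linarith [(log_lt_log hε hεM).trans_eq (log_exp _)]
  have hX0 : 0 < X := by linarith [abs_nonneg P, abs_nonneg K]
  have hX : X = |log ε| := by linarith [abs_of_neg (by linarith : log ε < 0)]
  have hsqrt : √ε = exp (-(X / 2)) := by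
    rw [← exp_log hε, ← exp_half]
    simp only [X, neg_div, neg_neg]
  have hlam_eq : 2 * lam * m ^ 2 * (4 * X + 2 * P) = 1 := by
    rw [one_div, log_inv, log_pow] at hrel
    field_simp at hrel ⊢
    push_cast at hrel
    linarith
  rw [hsqrt, ← hX]
  have hX_lam : 1 ≤ 10 * m ^ 2 * lam * X := by
    nlinarith [mul_nonneg (by positivity : 0 ≤ lam * m ^ 2)
      (by linarith [le_abs_self P, abs_nonneg K] : 0 ≤ X - 2 * P)]
  calc _ ≤ 2 * exp (|K| * (|log δ| + 1)) * (δ / X) :=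
        integral_mul_exp_mul_log_sq_le_div hδ hMX (by linear_combination 8 * hlam_eq)
    _ ≤ 2 * exp (|K| * (|log δ| + 1)) * (δ / X) * (10 * m ^ 2 * lam * X) :=
        le_mul_of_one_le_right (by positivity) hX_lam
    _ = 20 * m ^ 2 * exp (|K| * (|log δ| + 1)) * δ * lam := by
        field_simp [hX0.ne']
        norm_num
end

section
/- Let φ : [α, β] → ℝ solve -φ'' = g on [α, β] with φ(α) = φ(β) = 0, where g ≥ 0 is continuous. Then 0 ≤ φ(t) ≤ max( ∫_α^{t₀} g(s)(s-α) ds , ∫_{t₀}^{β} g(s)(β-s) ds ) for every t ∈ [α,β] and every t₀ ∈ [α,β]. -/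
/-! Since `φ'' = -g`, first-order Taylor expansion with integral remainder gives
`φ a = φ b + φ' b * (a - b) - ∫ s in a..b, g s * (s - a)`, and the remainder is nonnegative
whatever the order of `a` and `b`. Expanding around `t` at the two endpoints and eliminating
`φ' t` gives `φ t ≥ 0`. Expanding around `t₀` at the endpoints gives
`φ t₀ = ∫ s in α..t₀, g s * (s - α) + φ' t₀ * (t₀ - α)` and
`φ t₀ = ∫ s in t₀..β, g s * (β - s) - φ' t₀ * (β - t₀)`, so the tangent line
`φ t₀ + φ' t₀ * (t - t₀)`, which lies above `φ`, is bounded by the first integral if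
`φ' t₀ ≤ 0` and by the second if `φ' t₀ ≥ 0`. -/

open Set intervalIntegral

theorem eq_tangent_sub_integral_of_hasDerivAt {φ φ' g : ℝ → ℝ} {a b : ℝ}
    (hφ' : ∀ x ∈ uIcc a b, HasDerivAt φ (φ' x) x)
    (hφ'' : ∀ x ∈ uIcc a b, HasDerivAt φ' (-g x) x) (hg : ContinuousOn g (uIcc a b)) :
    φ a = φ b + φ' b * (a - b) - ∫ s in a..b, g s * (s - a) := by
  have hderiv : ∀ x ∈ uIcc a b,
      HasDerivAt (fun s => φ s + φ' s * (a - s)) (g x * (x - a)) x := by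
    intro x hx
    refine ((hφ' x hx).add ((hφ'' x hx).mul ((hasDerivAt_id' x).const_sub a))).congr_deriv ?_
    ring
  have hint : IntervalIntegrable (fun s => g s * (s - a)) MeasureTheory.volume a b :=
    (hg.mul (continuousOn_id.sub continuousOn_const)).intervalIntegrable
  rw [integral_eq_sub_of_hasDerivAt hderiv hint]
  ring

theorem integral_mul_sub_left_eq_integral_mul_sub_right (g : ℝ → ℝ) (a b : ℝ) :
    ∫ s in a..b, g s * (s - a) = ∫ s in b..a, g s * (a - s) := by
  rw [integral_symm, ← integral_neg]
  congr 1 with s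
  ring

theorem integral_mul_sub_left_nonneg {g : ℝ → ℝ} {a b : ℝ} (hg : ∀ s ∈ uIcc a b, 0 ≤ g s) :
    0 ≤ ∫ s in a..b, g s * (s - a) := by
  rcases le_total a b with hab | hba
  · exact integral_nonneg hab fun s hs =>
      mul_nonneg (hg s (Icc_subset_uIcc hs)) (sub_nonneg.2 hs.1)
  · rw [integral_mul_sub_left_eq_integral_mul_sub_right]
    exact integral_nonneg hba fun s hs =>
      mul_nonneg (hg s (Icc_subset_uIcc' hs)) (sub_nonneg.2 hs.2)

theorem two_point_bvp_bound (α β : ℝ) (hαβ : α < β) (g φ φ' : ℝ → ℝ)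
    (hg_cont : ContinuousOn g (Set.Icc α β))
    (hg_nonneg : ∀ s ∈ Set.Icc α β, 0 ≤ g s)
    (hφ' : ∀ t ∈ Set.Icc α β, HasDerivAt φ (φ' t) t)
    (hφ'' : ∀ t ∈ Set.Icc α β, HasDerivAt φ' (-g t) t)
    (hα : φ α = 0) (hβ : φ β = 0) :
    ∀ t ∈ Set.Icc α β, ∀ t₀ ∈ Set.Icc α β,
      0 ≤ φ t ∧
      φ t ≤ max (∫ s in α..t₀, g s * (s - α)) (∫ s in t₀..β, g s * (β - s)) := by
  have taylor : ∀ a ∈ Icc α β, ∀ b ∈ Icc α β,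
      φ a = φ b + φ' b * (a - b) - ∫ s in a..b, g s * (s - a) := fun a ha b hb =>
    eq_tangent_sub_integral_of_hasDerivAt (fun x hx => hφ' x (uIcc_subset_Icc ha hb hx))
      (fun x hx => hφ'' x (uIcc_subset_Icc ha hb hx)) (hg_cont.mono (uIcc_subset_Icc ha hb))
  have remainder_nonneg : ∀ a ∈ Icc α β, ∀ b ∈ Icc α β, 0 ≤ ∫ s in a..b, g s * (s - a) :=
    fun a ha b hb =>
      integral_mul_sub_left_nonneg fun s hs => hg_nonneg s (uIcc_subset_Icc ha hb hs)
  have hαI : α ∈ Icc α β := left_mem_Icc.2 hαβ.le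
  have hβI : β ∈ Icc α β := right_mem_Icc.2 hαβ.le
  intro t ht t₀ ht₀
  constructor
  · have hl := taylor α hαI t ht
    have hr := taylor β hβI t ht
    rw [hα] at hl
    rw [hβ] at hr
    have hweighted : (β - α) * φ t = (β - t) * (∫ s in α..t, g s * (s - α))
        + (t - α) * ∫ s in β..t, g s * (s - β) := by
      linear_combination -(β - t) * hl - (t - α) * hr
    nlinarith [mul_nonneg (sub_nonneg.2 ht.2) (remainder_nonneg α hαI t ht),
      mul_nonneg (sub_nonneg.2 ht.1) (remainder_nonneg β hβI t ht)]
  · have tangent := taylor t ht t₀ ht₀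
    have tangent_gap := remainder_nonneg t ht t₀ ht₀
    have hl := taylor α hαI t₀ ht₀
    have hr := taylor β hβI t₀ ht₀
    rw [integral_mul_sub_left_eq_integral_mul_sub_right] at hr
    rcases le_total (φ' t₀) 0 with hneg | hpos
    · have : φ' t₀ * (t - α) ≤ 0 := mul_nonpos_of_nonpos_of_nonneg hneg (by linarith [ht.1])
      exact le_max_of_le_left (by linarith)
    · have : 0 ≤ φ' t₀ * (β - t) := mul_nonneg hpos (by linarith [ht.2])
      exact le_max_of_le_right (by linarith)
end
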